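/- arXiv:1203.1807 — 3 statements merged into one kernel-verified Lean document; each statement's English description precedes it below -/
import Mathlib

section
/- Let v be a nonzero finite linear combination v = Σ b^m_n Θ^m_n with real coefficients b^m_n, the sum ranging over finitely many pairs of integers 0 ≤ m ≤ n. Then a formal power series g ∈ ℝ[[x,y,z]] satisfies v(g) = 0 if and only if g lies in the image of the (continuous) ℝ-algebra homomorphism ℝ[[u,w]] → ℝ[[x,y,z]] determined by substituting u ↦ x and w ↦ y² + z². In other words, the algebra of formal first integrals of any nonzero element of the span of the Θ^m_n is the (closed) subalgebra generated by x and y² + z². -/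
noncomputable section

/-- Formal power series in the variables x, y, z (indexed `0, 1, 2`). -/
abbrev PS := MvPowerSeries (Fin 3) ℝ

/-- The formal partial derivative of a formal power series with respect to the i-th variable. -/
def psD (i : Fin 3) (f : PS) : PS :=
  fun d => ((d i : ℝ) + 1) * f (d + Finsupp.single i 1)

/-- The derivation action `v(g) = v₁ ∂g/∂x + v₂ ∂g/∂y + v₃ ∂g/∂z` of a formal vector field. -/
def psApply (v : Fin 3 → PS) (g : PS) : PS := ∑ i, v i * psD i g

/-- The vector field `F^l_k := x^l (y²+z²)^{k−l} ((k−l+1) x ∂_x − ((l+1)/2) y ∂_y − ((l+1)/2) z ∂_z)`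
for integers `−1 ≤ l ≤ k`; for `l = −1` this is `(k+2)(y²+z²)^{k+1} ∂_x`. -/
def Fps (l k : ℤ) : Fin 3 → PS :=
  ![MvPowerSeries.C (σ := Fin 3) (R := ℝ) ((k - l + 1 : ℤ) : ℝ) * MvPowerSeries.X 0 ^ (l + 1).toNat *
      (MvPowerSeries.X 1 ^ 2 + MvPowerSeries.X 2 ^ 2) ^ (k - l).toNat,
    MvPowerSeries.C (σ := Fin 3) (R := ℝ) (-((l + 1 : ℤ) : ℝ) / 2) * MvPowerSeries.X 0 ^ l.toNat *
      MvPowerSeries.X 1 * (MvPowerSeries.X 1 ^ 2 + MvPowerSeries.X 2 ^ 2) ^ (k - l).toNat,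
    MvPowerSeries.C (σ := Fin 3) (R := ℝ) (-((l + 1 : ℤ) : ℝ) / 2) * MvPowerSeries.X 0 ^ l.toNat *
      MvPowerSeries.X 2 * (MvPowerSeries.X 1 ^ 2 + MvPowerSeries.X 2 ^ 2) ^ (k - l).toNat]

/-- The vector field `Θ^m_n := x^m (y²+z²)^{n−m} (z ∂_y − y ∂_z)` for integers `0 ≤ m ≤ n`. -/
def Tps (m n : ℤ) : Fin 3 → PS :=
  ![0,
    MvPowerSeries.X 0 ^ m.toNat * (MvPowerSeries.X 1 ^ 2 + MvPowerSeries.X 2 ^ 2) ^ (n - m).toNat *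
      MvPowerSeries.X 2,
    -(MvPowerSeries.X 0 ^ m.toNat * (MvPowerSeries.X 1 ^ 2 + MvPowerSeries.X 2 ^ 2) ^ (n - m).toNat *
      MvPowerSeries.X 1)]

/-- Substitution of a one-variable formal power series `h` into `f`; this coefficientwise
finite sum agrees with the usual composition of formal power series whenever `f` has zero
constant term. -/
def substOne (f : PS) (h : PowerSeries ℝ) : PS :=
  fun d => ∑ n ∈ Finset.range ((d.sum fun _ v => v) + 1),
    PowerSeries.coeff (R := ℝ) n h * MvPowerSeries.coeff (R := ℝ) d (f ^ n)

/-- The image of the monomial `u^{e 0} w^{e 1}` under the substitution `u ↦ x, w ↦ y²+z²`. -/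
def subMon (e : Fin 2 →₀ ℕ) : PS :=
  MvPowerSeries.X 0 ^ (e 0) * (MvPowerSeries.X 1 ^ 2 + MvPowerSeries.X 2 ^ 2) ^ (e 1)

/-- The (continuous) ℝ-algebra homomorphism `ℝ[[u,w]] → ℝ[[x,y,z]]` determined by the
substitution `u ↦ x`, `w ↦ y²+z²`, computed coefficientwise (each coefficient of the image
is a finite sum, since only exponents `e` with `e 0, e 1 ≤ deg d` can contribute). -/
def subst2 (h : MvPowerSeries (Fin 2) ℝ) : PS :=
  fun d => ∑ e ∈ Finset.Iic
      (Finsupp.single (0 : Fin 2) (d.sum fun _ v => v) +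
        Finsupp.single 1 (d.sum fun _ v => v)),
    MvPowerSeries.coeff (R := ℝ) e h * MvPowerSeries.coeff (R := ℝ) d (subMon e)

/-! Each `Θ^m_n` is a series times `z ∂_y − y ∂_z`, so a nonzero combination `v` is
`P · (z ∂_y − y ∂_z)` with `P ≠ 0`, and since `ℝ[[x,y,z]]` is a domain, `v(g) = 0` iff
`z ∂_y g = y ∂_z g`. On coefficients this says that `g_{a,1,c} = g_{a,b,1} = 0` and
`(b+2) g_{a,b+2,c} = (c+2) g_{a,b,c+2}`, a recurrence which determines `g` from its
coefficients with `c = 0` and forces those with odd `b` to vanish. The image of `x^a (y²+z²)^n`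
satisfies it, and its coefficients along `c = 0` are exactly those of `x^a y^{2n}`. -/

open MvPowerSeries

section Exponents

def exp3 (a b c : ℕ) : Fin 3 →₀ ℕ :=
  Finsupp.single 0 a + Finsupp.single 1 b + Finsupp.single 2 c

variable (a b c : ℕ)

@[simp] lemma exp3_apply_zero : exp3 a b c 0 = a := by simp [exp3]

@[simp] lemma exp3_apply_one : exp3 a b c 1 = b := by simp [exp3]

@[simp] lemma exp3_apply_two : exp3 a b c 2 = c := by simp [exp3]

lemma eq_exp3 (d : Fin 3 →₀ ℕ) : d = exp3 (d 0) (d 1) (d 2) := by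
  ext i; fin_cases i <;> simp

lemma exp3_inj {a' b' c' : ℕ} : exp3 a b c = exp3 a' b' c' ↔ a = a' ∧ b = b' ∧ c = c' := by
  refine ⟨fun h => ⟨?_, ?_, ?_⟩, by rintro ⟨rfl, rfl, rfl⟩; rfl⟩
  · simpa using DFunLike.congr_fun h 0
  · simpa using DFunLike.congr_fun h 1
  · simpa using DFunLike.congr_fun h 2

lemma sum_exp3 : ((exp3 a b c).sum fun _ v => v) = a + b + c := by
  simp [Finsupp.sum_fintype, Fin.sum_univ_three]

lemma exp3_add_single_one : exp3 a b c + Finsupp.single 1 1 = exp3 a (b + 1) c := by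
  ext i; fin_cases i <;> simp

lemma exp3_add_single_two : exp3 a b c + Finsupp.single 2 1 = exp3 a b (c + 1) := by
  ext i; fin_cases i <;> simp

def exp2 (a n : ℕ) : Fin 2 →₀ ℕ := Finsupp.single 0 a + Finsupp.single 1 n

@[simp] lemma exp2_apply_zero (n : ℕ) : exp2 a n 0 = a := by simp [exp2]

@[simp] lemma exp2_apply_one (n : ℕ) : exp2 a n 1 = n := by simp [exp2]

lemma eq_exp2 (e : Fin 2 →₀ ℕ) : e = exp2 (e 0) (e 1) := by
  ext i; fin_cases i <;> simp

end Exponents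

section MulX

variable {σ R : Type*} [CommSemiring R] (s : σ) (f : MvPowerSeries σ R) (d : σ →₀ ℕ)

lemma coeff_add_single_X_mul : coeff (d + Finsupp.single s 1) (X s * f) = coeff d f := by
  simpa [X_def, add_comm] using coeff_add_monomial_mul (Finsupp.single s 1) d f 1

lemma coeff_X_mul_of_apply_eq_zero (hd : d s = 0) : coeff d (X s * f) = 0 := by
  classical
  rw [X_def, coeff_monomial_mul, if_neg]
  exact fun h => by simpa [hd] using h s

end MulX

section RotDeriv

def rotDeriv (g : PS) : PS := X 2 * psD 1 g - X 1 * psD 2 g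

variable (g : PS) (a b c : ℕ)

lemma coeff_psD_one : coeff (exp3 a b c) (psD 1 g) = (b + 1) * coeff (exp3 a (b + 1) c) g := by
  simp only [coeff_apply, psD, exp3_add_single_one, exp3_apply_one]

lemma coeff_psD_two : coeff (exp3 a b c) (psD 2 g) = (c + 1) * coeff (exp3 a b (c + 1)) g := by
  simp only [coeff_apply, psD, exp3_add_single_two, exp3_apply_two]

lemma coeff_rotDeriv_succ_succ :
    coeff (exp3 a (b + 1) (c + 1)) (rotDeriv g) =
      (b + 2) * coeff (exp3 a (b + 2) c) g - (c + 2) * coeff (exp3 a b (c + 2)) g := by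
  rw [rotDeriv, map_sub, ← exp3_add_single_two, coeff_add_single_X_mul, coeff_psD_one,
    exp3_add_single_two, ← exp3_add_single_one a b, coeff_add_single_X_mul, coeff_psD_two]
  push_cast
  ring

lemma coeff_rotDeriv_zero_succ : coeff (exp3 a 0 (c + 1)) (rotDeriv g) = coeff (exp3 a 1 c) g := by
  rw [rotDeriv, map_sub, ← exp3_add_single_two, coeff_add_single_X_mul,
    coeff_X_mul_of_apply_eq_zero _ _ _ (by simp), coeff_psD_one]
  simp

lemma coeff_rotDeriv_succ_zero :
    coeff (exp3 a (b + 1) 0) (rotDeriv g) = -coeff (exp3 a b 1) g := by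
  rw [rotDeriv, map_sub, coeff_X_mul_of_apply_eq_zero _ _ _ (by simp), ← exp3_add_single_one,
    coeff_add_single_X_mul, coeff_psD_two]
  simp

lemma coeff_rotDeriv_zero_zero : coeff (exp3 a 0 0) (rotDeriv g) = 0 := by
  rw [rotDeriv, map_sub, coeff_X_mul_of_apply_eq_zero _ _ _ (by simp),
    coeff_X_mul_of_apply_eq_zero _ _ _ (by simp), sub_zero]

lemma rotDeriv_eq_zero_iff :
    rotDeriv g = 0 ↔ (∀ a c, coeff (exp3 a 1 c) g = 0) ∧ (∀ a b, coeff (exp3 a b 1) g = 0) ∧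
      ∀ a b c : ℕ, (b + 2 : ℝ) * coeff (exp3 a (b + 2) c) g =
        (c + 2) * coeff (exp3 a b (c + 2)) g := by
  refine ⟨fun h => ⟨fun a c => ?_, fun a b => ?_, fun a b c => ?_⟩, fun ⟨h1, h2, h3⟩ => ?_⟩
  · simpa [coeff_rotDeriv_zero_succ] using congr_arg (coeff (exp3 a 0 (c + 1))) h
  · simpa [coeff_rotDeriv_succ_zero] using congr_arg (coeff (exp3 a (b + 1) 0)) h
  · simpa [coeff_rotDeriv_succ_succ, sub_eq_zero] using congr_arg (coeff (exp3 a (b + 1) (c + 1))) h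
  · suffices ∀ a b c, coeff (exp3 a b c) (rotDeriv g) = 0 by
      ext d
      rw [eq_exp3 d, this, map_zero]
    intro a b c
    rcases b with _ | b <;> rcases c with _ | c
    · exact coeff_rotDeriv_zero_zero g _
    · rw [coeff_rotDeriv_zero_succ, h1]
    · rw [coeff_rotDeriv_succ_zero, h2, neg_zero]
    · rw [coeff_rotDeriv_succ_succ, h3, sub_self]

variable {g}

lemma coeff_exp3_odd_of_rotDeriv_eq_zero (hg : rotDeriv g = 0) (i : ℕ) :
    coeff (exp3 a (2 * i + 1) c) g = 0 := by
  obtain ⟨h1, -, h3⟩ := (rotDeriv_eq_zero_iff g).mp hg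
  induction i generalizing c with
  | zero => exact h1 a c
  | succ i ih =>
    have := h3 a (2 * i + 1) c
    rw [ih, mul_zero, mul_eq_zero] at this
    exact this.resolve_left (by positivity)

lemma eq_of_rotDeriv_eq_zero {g' : PS} (hg : rotDeriv g = 0) (hg' : rotDeriv g' = 0)
    (h0 : ∀ a b, coeff (exp3 a b 0) g = coeff (exp3 a b 0) g') : g = g' := by
  obtain ⟨-, h2, h3⟩ := (rotDeriv_eq_zero_iff g).mp hg
  obtain ⟨-, h2', h3'⟩ := (rotDeriv_eq_zero_iff g').mp hg'
  suffices ∀ c a b, coeff (exp3 a b c) g = coeff (exp3 a b c) g' by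
    ext d
    rw [eq_exp3 d]
    exact this _ _ _
  intro c
  induction c using Nat.twoStepInduction with
  | zero => exact h0
  | one => intro a b; rw [h2, h2']
  | more c ih _ =>
    intro a b
    have h := h3 a b c
    rw [ih] at h
    exact mul_left_cancel₀ (by positivity) (h.symm.trans (h3' a b c))

end RotDeriv

section Subst2

variable (a b c : ℕ)

lemma subMon_eq_sum (e : Fin 2 →₀ ℕ) : subMon e = ∑ k ∈ Finset.range (e 1 + 1),
    monomial (exp3 (e 0) (2 * k) (2 * (e 1 - k))) ((e 1).choose k : ℝ) := by
  rw [subMon, add_pow, Finset.mul_sum]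
  refine Finset.sum_congr rfl fun k _ => ?_
  rw [← pow_mul, ← pow_mul, X_pow_eq, X_pow_eq, X_pow_eq, ← map_natCast (C (σ := Fin 3)),
    ← monomial_zero_eq_C_apply]
  simp only [monomial_mul_monomial, one_mul, mul_one, add_zero, exp3, add_assoc]

lemma coeff_subMon (e : Fin 2 →₀ ℕ) : coeff (exp3 a b c) (subMon e) =
    if e = exp2 a ((b + c) / 2) ∧ Even b ∧ Even c then ((e 1).choose (b / 2) : ℝ) else 0 := by
  rw [subMon_eq_sum, map_sum]
  simp only [coeff_monomial, exp3_inj]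
  split_ifs with he
  · obtain ⟨rfl, ⟨i, rfl⟩, ⟨j, rfl⟩⟩ := he
    rw [Finset.sum_eq_single i]
    · simp only [exp2_apply_zero, exp2_apply_one, true_and]
      rw [if_pos (by omega), show (i + i) / 2 = i by omega]
    · intro k _ hk
      rw [if_neg (by simp only [exp2_apply_one]; omega)]
    · simp only [exp2_apply_one, Finset.mem_range]
      omega
  · refine Finset.sum_eq_zero fun k hk => if_neg ?_
    rintro ⟨rfl, rfl, hc⟩
    rw [Finset.mem_range] at hk
    refine he ⟨?_, even_two_mul k, ⟨e 1 - k, by omega⟩⟩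
    conv_lhs => rw [eq_exp2 e]
    congr 1
    omega

lemma coeff_subst2 (h : MvPowerSeries (Fin 2) ℝ) : coeff (exp3 a b c) (subst2 h) =
    if Even b ∧ Even c then
      ((b + c) / 2).choose (b / 2) * coeff (exp2 a ((b + c) / 2)) h
    else 0 := by
  rw [coeff_apply]
  simp only [subst2, sum_exp3, coeff_subMon]
  split_ifs with hbc
  · simp only [hbc, and_true, mul_ite, mul_zero]
    rw [Finset.sum_ite_eq', if_pos, exp2_apply_one, mul_comm]
    rw [Finset.mem_Iic]
    intro i
    fin_cases i <;> simp [exp2] <;> omega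
  · simp [hbc]

lemma coeff_subst2_exp3_two_mul (h : MvPowerSeries (Fin 2) ℝ) (i j : ℕ) :
    coeff (exp3 a (2 * i) (2 * j)) (subst2 h) = (i + j).choose i * coeff (exp2 a (i + j)) h := by
  rw [coeff_subst2, if_pos ⟨even_two_mul i, even_two_mul j⟩,
    show (2 * i + 2 * j) / 2 = i + j by omega, show 2 * i / 2 = i by omega]

lemma coeff_subst2_of_odd (h : MvPowerSeries (Fin 2) ℝ) (hbc : Odd b ∨ Odd c) :
    coeff (exp3 a b c) (subst2 h) = 0 := by
  rw [coeff_subst2, if_neg]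
  simp only [← Nat.not_even_iff_odd] at hbc
  tauto

lemma rotDeriv_subst2 (h : MvPowerSeries (Fin 2) ℝ) : rotDeriv (subst2 h) = 0 := by
  refine (rotDeriv_eq_zero_iff _).mpr ⟨fun a c => coeff_subst2_of_odd _ _ _ _ (.inl odd_one),
    fun a b => coeff_subst2_of_odd _ _ _ _ (.inr odd_one), fun a b c => ?_⟩
  obtain ⟨i, rfl | rfl⟩ := Nat.even_or_odd' b <;> obtain ⟨j, rfl | rfl⟩ := Nat.even_or_odd' c
  · rw [show 2 * i + 2 = 2 * (i + 1) by ring, show 2 * j + 2 = 2 * (j + 1) by ring,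
      coeff_subst2_exp3_two_mul, coeff_subst2_exp3_two_mul, show i + 1 + j = i + (j + 1) by ring]
    have hchoose : (((i + (j + 1)).choose (i + 1) * (i + 1) : ℕ) : ℝ) =
        ((i + (j + 1)).choose i * (j + 1) : ℕ) := by
      rw [Nat.choose_succ_right_eq, Nat.add_sub_cancel_left]
    push_cast at hchoose ⊢
    linear_combination 2 * coeff (exp2 a (i + (j + 1))) h * hchoose
  all_goals rw [coeff_subst2_of_odd, coeff_subst2_of_odd, mul_zero, mul_zero] <;>
    simp only [Nat.odd_iff] <;> omega

end Subst2

theorem rotDeriv_eq_zero_iff_exists_subst2 (g : PS) :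
    rotDeriv g = 0 ↔ ∃ h : MvPowerSeries (Fin 2) ℝ, g = subst2 h := by
  refine ⟨fun hg => ?_, fun ⟨h, hgh⟩ => hgh ▸ rotDeriv_subst2 h⟩
  obtain ⟨h, hh⟩ : ∃ h : MvPowerSeries (Fin 2) ℝ,
      ∀ a n, coeff (exp2 a n) h = coeff (exp3 a (2 * n) 0) g :=
    ⟨fun e => coeff (exp3 (e 0) (2 * e 1) 0) g, fun a n => by
      change coeff (exp3 (exp2 a n 0) (2 * exp2 a n 1) 0) g = _
      simp⟩
  refine ⟨h, eq_of_rotDeriv_eq_zero hg (rotDeriv_subst2 h) fun a b => ?_⟩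
  obtain ⟨i, rfl | rfl⟩ := Nat.even_or_odd' b
  · rw [← mul_zero 2, coeff_subst2_exp3_two_mul, add_zero, hh, Nat.choose_self, Nat.cast_one,
      one_mul, mul_zero]
  · rw [coeff_exp3_odd_of_rotDeriv_eq_zero _ _ hg,
      coeff_subst2_of_odd _ _ _ _ (.inl (odd_two_mul_add_one i))]

section RotField

def rotField (f : PS) : Fin 3 → PS := ![0, f * X 2, -(f * X 1)]

lemma psApply_rotField (f g : PS) : psApply (rotField f) g = f * rotDeriv g := by
  simp only [psApply, rotField, rotDeriv, Fin.sum_univ_three, Matrix.cons_val_zero,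
    Matrix.cons_val_one, Matrix.cons_val]
  ring

lemma rotField_eq_zero_iff {f : PS} : rotField f = 0 ↔ f = 0 := by
  refine ⟨fun h => ?_, by rintro rfl; simp [rotField]⟩
  have hX : (X 2 : PS) ≠ 0 := fun hX => by simpa using congr_arg (coeff (Finsupp.single 2 1)) hX
  simpa [rotField, hX] using congr_fun h 1

lemma Tps_eq_rotField (m n : ℤ) :
    Tps m n = rotField (X 0 ^ m.toNat * (X 1 ^ 2 + X 2 ^ 2) ^ (n - m).toNat) := rfl

lemma sum_smul_rotField {ι : Type*} (S : Finset ι) (b : ι → ℝ) (f : ι → PS) :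
    (fun i => ∑ p ∈ S, b p • rotField (f p) i) = rotField (∑ p ∈ S, b p • f p) := by
  funext i
  fin_cases i <;> simp [rotField, Finset.sum_mul]

end RotField

theorem firstIntegrals_of_nonzero_theta_combination_general
    (S : Finset (ℤ × ℤ)) (b : ℤ × ℤ → ℝ)
    (v : Fin 3 → PS) (hv : v = fun i => ∑ p ∈ S, b p • Tps p.1 p.2 i) (hv0 : v ≠ 0)
    (g : PS) :
    psApply v g = 0 ↔ ∃ h : MvPowerSeries (Fin 2) ℝ, g = subst2 h := by
  set f : PS := ∑ p ∈ S, b p • (X 0 ^ p.1.toNat * (X 1 ^ 2 + X 2 ^ 2) ^ (p.2 - p.1).toNat)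
  have hvf : v = rotField f := by simp only [hv, Tps_eq_rotField, sum_smul_rotField, f]
  have hf : f ≠ 0 := fun hf => hv0 (hvf.trans (rotField_eq_zero_iff.mpr hf))
  rw [hvf, psApply_rotField, mul_eq_zero, or_iff_right hf, rotDeriv_eq_zero_iff_exists_subst2]

/-- for any nonzero finite linear combination `v = Σ b^m_n Θ^m_n`
(`0 ≤ m ≤ n`), a formal power series `g` satisfies `v(g) = 0` if and only if `g` lies in
the image of the substitution homomorphism `ℝ[[u,w]] → ℝ[[x,y,z]]`, `u ↦ x`, `w ↦ y²+z²`: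
the algebra of formal first integrals of `v` is the closed subalgebra generated by `x` and
`y²+z²`. -/
theorem firstIntegrals_of_nonzero_theta_combination
    (S : Finset (ℤ × ℤ)) (b : ℤ × ℤ → ℝ) (hS : ∀ p ∈ S, 0 ≤ p.1 ∧ p.1 ≤ p.2)
    (v : Fin 3 → PS) (hv : v = fun i => ∑ p ∈ S, b p • Tps p.1 p.2 i) (hv0 : v ≠ 0)
    (g : PS) :
    psApply v g = 0 ↔ ∃ h : MvPowerSeries (Fin 2) ℝ, g = subst2 h :=
  firstIntegrals_of_nonzero_theta_combination_general S b v hv hv0 g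
end
end

section
/- The vector field E := x⁷(y²+z²)(2x ∂_x + y ∂_y + z ∂_z) on ℝ³ has no nonconstant formal first integral: if g ∈ ℝ[[x,y,z]] satisfies x⁷(y²+z²)(2x ∂g/∂x + y ∂g/∂y + z ∂g/∂z) = 0, then g is a constant. -/
noncomputable section

/-! Since `ℝ[[x,y,z]]` has no zero divisors and `x⁷(y²+z²) ≠ 0`, the series `g` is annihilated by
the quasi-homogeneous Euler field `2x ∂_x + y ∂_y + z ∂_z`. That field multiplies the coefficient of
`xᵃ yᵇ zᶜ` by `2a + b + c`, which vanishes only for `a = b = c = 0`. -/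

open MvPowerSeries

lemma MvPowerSeries.eq_C_of_coeff_eq_zero {σ R : Type*} [Semiring R] {g : MvPowerSeries σ R}
    (hg : ∀ d ≠ 0, coeff d g = 0) : g = C (constantCoeff g) := by
  classical
  ext d
  rw [coeff_C]
  split_ifs with hd
  · rw [hd, coeff_zero_eq_constantCoeff_apply]
  · exact hg d hd

lemma MvPowerSeries.X_ne_zero {σ R : Type*} [Semiring R] [Nontrivial R] (s : σ) :
    (X s : MvPowerSeries σ R) ≠ 0 := fun h => by
  classical
  simpa using congrArg (coeff (Finsupp.single s 1)) h

lemma MvPowerSeries.X_sq_add_X_sq_ne_zero {σ R : Type*} [Semiring R] [Nontrivial R] {i j : σ}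
    (hij : i ≠ j) : (X i ^ 2 + X j ^ 2 : MvPowerSeries σ R) ≠ 0 := by
  classical
  intro h
  have := congrArg (coeff (Finsupp.single i 2)) h
  simp [coeff_X_pow, Finsupp.single_eq_single_iff, hij] at this

lemma coeff_X_mul_psD (i : Fin 3) (g : PS) (d : Fin 3 →₀ ℕ) :
    coeff d (X i * psD i g) = d i * coeff d g := by
  rw [X, coeff_monomial_mul]
  split_ifs with hd
  · have hdi : 1 ≤ d i := Finsupp.single_le_iff.mp hd
    change 1 * ((((d - Finsupp.single i 1 : Fin 3 →₀ ℕ) i : ℝ) + 1) *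
      g (d - Finsupp.single i 1 + Finsupp.single i 1)) = d i * g d
    rw [tsub_add_cancel_of_le hd, Finsupp.tsub_apply, Finsupp.single_eq_same]
    push_cast [hdi]
    ring
  · have hdi : d i = 0 := by
      by_contra hne
      exact hd (Finsupp.single_le_iff.mpr (Nat.one_le_iff_ne_zero.mpr hne))
    simp [hdi]

lemma coeff_weightedEuler (w : Fin 3 → ℕ) (g : PS) (d : Fin 3 →₀ ℕ) :
    coeff d (∑ i, (w i : PS) * X i * psD i g) = (∑ i, (w i * d i : ℕ)) * coeff d g := by
  simp only [map_sum, mul_assoc, ← map_natCast (C (σ := Fin 3) (R := ℝ)), coeff_C_mul,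
    coeff_X_mul_psD]
  push_cast
  rw [Finset.sum_mul]
  simp only [mul_assoc]

lemma eq_C_of_weightedEuler_eq_zero (w : Fin 3 → ℕ) (hw : ∀ i, w i ≠ 0) {g : PS}
    (hg : ∑ i, (w i : PS) * X i * psD i g = 0) : g = C (constantCoeff g) := by
  refine eq_C_of_coeff_eq_zero fun d hd => ?_
  have hweight : (∑ i, w i * d i) ≠ 0 := by
    obtain ⟨i, hi⟩ := Finsupp.ne_iff.mp hd
    exact (Finset.sum_pos' (fun _ _ => Nat.zero_le _)
      ⟨i, Finset.mem_univ i, Nat.mul_pos (Nat.pos_of_ne_zero (hw i)) (Nat.pos_of_ne_zero hi)⟩).ne'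
  have hcoeff := coeff_weightedEuler w g d
  rw [hg, map_zero, eq_comm, mul_eq_zero] at hcoeff
  exact hcoeff.resolve_left (by exact_mod_cast hweight)

/-- the vector field `E := x⁷(y²+z²)(2x ∂_x + y ∂_y + z ∂_z)` has no
nonconstant formal first integral: if `x⁷(y²+z²)(2x ∂g/∂x + y ∂g/∂y + z ∂g/∂z) = 0`
then `g` is a constant. -/
theorem no_nonconstant_first_integral (g : PS)
    (h : MvPowerSeries.X 0 ^ 7 * (MvPowerSeries.X 1 ^ 2 + MvPowerSeries.X 2 ^ 2) *
      (2 * MvPowerSeries.X 0 * psD 0 g + MvPowerSeries.X 1 * psD 1 g +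
        MvPowerSeries.X 2 * psD 2 g) = 0) :
    ∃ c : ℝ, g = MvPowerSeries.C (σ := Fin 3) (R := ℝ) c := by
  have hfactor : (X 0 ^ 7 * (X 1 ^ 2 + X 2 ^ 2) : PS) ≠ 0 :=
    mul_ne_zero (pow_ne_zero _ (X_ne_zero 0)) (X_sq_add_X_sq_ne_zero (by decide))
  have heuler : ∑ i, ((![2, 1, 1] : Fin 3 → ℕ) i : PS) * X i * psD i g = 0 := by
    simpa [Fin.sum_univ_three] using (mul_eq_zero.mp h).resolve_left hfactor
  exact ⟨_, eq_C_of_weightedEuler_eq_zero ![2, 1, 1] (by decide) heuler⟩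
end
end

section
/- Fix an integer p ≥ 1, a sign ε ∈ {+1, −1}, real coefficients α_{p+1}, …, α_N, integers −1 ≤ n_1, …, n_r ≤ N−1, real parameters μ_1, …, μ_r, and an arbitrary formal power series g ∈ ℝ[[x]]. Consider the vector field w on ℝ³ given by ẋ = (y²+z²) + ε x^{p+1} + Σ_{i=1}^r μ_i x^{n_i+1} + Σ_{k=p+1}^N α_k x^{k+1}, ẏ = z g(x) − ε((p+1)/2) x^p y − Σ_{i=1}^r ((n_i+1)/2) μ_i x^{n_i} y − Σ_{k=p+1}^N ((k+1)/2) α_k x^k y, ż = −y g(x) − ε((p+1)/2) x^p z − Σ_{i=1}^r ((n_i+1)/2) μ_i x^{n_i} z − Σ_{k=p+1}^N ((k+1)/2) α_k x^k z. Then the function f(x,y,z) := (y²+z²)·( (1/2)(y²+z²) + ε x^{p+1} + Σ_{i=1}^r μ_i x^{n_i+1} + Σ_{k=p+1}^N α_k x^{k+1} ) is a first integral of w, i.e. w(f) = 0. -/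
noncomputable section

/-!
Write `ρ = y² + z²` and `B(x) = ε x^{p+1} + Σᵢ μᵢ x^{nᵢ+1} + Σₖ αₖ x^{k+1}`, so that
`w = (ρ + B) ∂ₓ + g(x) (z ∂_y − y ∂_z) − (B'(x)/2) (y ∂_y + z ∂_z)` and `f = ρ (ρ/2 + B)`.
Since `∂_y f = 2y (ρ + B)` and `∂_z f = 2z (ρ + B)`, the rotation `z ∂_y − y ∂_z` annihilates `f`,
and the remaining terms give `(ρ + B) (ρ B' − (B'/2) · 2ρ) = 0`.
-/

open MvPowerSeries

theorem psD_eq_pderiv (i : Fin 3) : psD i = pderiv ℝ i := by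
  funext f
  ext d
  rw [coeff_pderiv, mul_comm]
  rfl

theorem psApply_eq_sum_pderiv (v : Fin 3 → PS) (f : PS) :
    psApply v f = ∑ i, v i * pderiv ℝ i f := by
  simp only [psApply, psD_eq_pderiv]

theorem pderiv_smul_X_pow_add_one {σ : Type*} (i : σ) (c : ℝ) (k : ℕ) :
    pderiv ℝ i (c • X i ^ (k + 1) : MvPowerSeries σ ℝ) =
      (2 : ℝ) • (((k : ℝ) + 1) / 2 * c) • X i ^ k := by
  rw [Derivation.map_smul, pderiv_pow, pderiv_X_self, smul_smul, Nat.add_sub_cancel,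
    show (2 : ℝ) * (((k : ℝ) + 1) / 2 * c) = c * (k + 1) by ring, mul_smul]
  simp [smul_eq_C_mul, map_natCast]

theorem pderiv_smul_X_pow_toNat_add_one {σ : Type*} (i : σ) (c : ℝ) (n : ℤ) (hn : -1 ≤ n) :
    pderiv ℝ i (c • X i ^ (n + 1).toNat : MvPowerSeries σ ℝ) =
      (2 : ℝ) • (((n : ℝ) + 1) / 2 * c) • X i ^ n.toNat := by
  obtain ⟨k, rfl⟩ | rfl : (∃ k : ℕ, n = k) ∨ n = -1 := by
    by_cases h : n = -1
    exacts [.inr h, .inl ⟨n.toNat, by omega⟩]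
  · simpa using pderiv_smul_X_pow_add_one i c k
  · simp

theorem psApply_first_integral_of_pderiv_eq (B H g : PS) (hB₀ : pderiv ℝ 0 B = (2 : ℝ) • H)
    (hB₁ : pderiv ℝ 1 B = 0) (hB₂ : pderiv ℝ 2 B = 0) :
    psApply ![(X 1 ^ 2 + X 2 ^ 2) + B, X 2 * g - H * X 1, -(X 1 * g) - H * X 2]
      ((X 1 ^ 2 + X 2 ^ 2) * ((1 / 2 : ℝ) • (X 1 ^ 2 + X 2 ^ 2) + B)) = 0 := by
  have hhalf : (C (2⁻¹ : ℝ) : PS) * 2 = 1 := by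
    rw [← map_ofNat C 2, ← map_mul]
    norm_num
  simp [psApply_eq_sum_pderiv, Fin.sum_univ_three, hB₀, hB₁, hB₂, smul_eq_C_mul, map_ofNat]
  -- with `c = C 2⁻¹` kept symbolic, the left side is `-2 ρ² H (2c - 1)`
  linear_combination (-2 * (X 1 ^ 2 + X 2 ^ 2) ^ 2 * H) * hhalf

theorem parametric_normal_form_first_integral_general
    (p N : ℕ) (ε : ℝ)
    (r : ℕ) (nIdx : Fin r → ℤ) (hn : ∀ i, -1 ≤ nIdx i ∧ nIdx i ≤ (N : ℤ) - 1)
    (μ : Fin r → ℝ) (α : ℕ → ℝ)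
    (g : PS)
    (w : Fin 3 → PS)
    (hw : w =
      ![(MvPowerSeries.X 1 ^ 2 + MvPowerSeries.X 2 ^ 2) + ε • MvPowerSeries.X 0 ^ (p + 1) +
          ∑ i, μ i • MvPowerSeries.X 0 ^ (nIdx i + 1).toNat +
          ∑ k ∈ Finset.Icc (p + 1) N, α k • MvPowerSeries.X 0 ^ (k + 1),
        MvPowerSeries.X 2 * g -
          (ε * ((p : ℝ) + 1) / 2) • (MvPowerSeries.X 0 ^ p * MvPowerSeries.X 1) -
          ∑ i, (((nIdx i : ℝ) + 1) / 2 * μ i) •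
            (MvPowerSeries.X 0 ^ (nIdx i).toNat * MvPowerSeries.X 1) -
          ∑ k ∈ Finset.Icc (p + 1) N, (((k : ℝ) + 1) / 2 * α k) •
            (MvPowerSeries.X 0 ^ k * MvPowerSeries.X 1),
        -(MvPowerSeries.X 1 * g) -
          (ε * ((p : ℝ) + 1) / 2) • (MvPowerSeries.X 0 ^ p * MvPowerSeries.X 2) -
          ∑ i, (((nIdx i : ℝ) + 1) / 2 * μ i) •
            (MvPowerSeries.X 0 ^ (nIdx i).toNat * MvPowerSeries.X 2) -
          ∑ k ∈ Finset.Icc (p + 1) N, (((k : ℝ) + 1) / 2 * α k) •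
            (MvPowerSeries.X 0 ^ k * MvPowerSeries.X 2)])
    (f : PS)
    (hf : f = (MvPowerSeries.X 1 ^ 2 + MvPowerSeries.X 2 ^ 2) *
        ((1 / 2 : ℝ) • (MvPowerSeries.X 1 ^ 2 + MvPowerSeries.X 2 ^ 2) +
          ε • MvPowerSeries.X 0 ^ (p + 1) +
          ∑ i, μ i • MvPowerSeries.X 0 ^ (nIdx i + 1).toNat +
          ∑ k ∈ Finset.Icc (p + 1) N, α k • MvPowerSeries.X 0 ^ (k + 1))) :
    psApply w f = 0 := by
  have hn₁ (i : Fin r) : -1 ≤ nIdx i := (hn i).1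
  set B : PS := ε • X 0 ^ (p + 1) + ∑ i, μ i • X 0 ^ (nIdx i + 1).toNat +
    ∑ k ∈ Finset.Icc (p + 1) N, α k • X 0 ^ (k + 1)
  set H : PS := (ε * ((p : ℝ) + 1) / 2) • X 0 ^ p +
    ∑ i, (((nIdx i : ℝ) + 1) / 2 * μ i) • X 0 ^ (nIdx i).toNat +
    ∑ k ∈ Finset.Icc (p + 1) N, (((k : ℝ) + 1) / 2 * α k) • X 0 ^ k
  have hB₀ : pderiv ℝ 0 B = (2 : ℝ) • H := by
    simp only [B, H, map_add, map_sum, pderiv_smul_X_pow_add_one, smul_add, Finset.smul_sum,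
      pderiv_smul_X_pow_toNat_add_one _ _ _ (hn₁ _)]
    rw [div_mul_eq_mul_div, mul_comm]
  have hB₁ : pderiv ℝ 1 B = 0 := by simp [B]
  have hB₂ : pderiv ℝ 2 B = 0 := by simp [B]
  subst hw hf
  convert psApply_first_integral_of_pderiv_eq B H g hB₀ hB₁ hB₂ using 2
  · simp only [B, H, add_mul, Finset.sum_mul, smul_mul_assoc, ← add_assoc, sub_add_eq_sub_sub]
  · simp only [B, ← add_assoc]

/-- the truncated infinite-level normal form vector field
`ẋ = (y²+z²) + ε x^{p+1} + Σᵢ μᵢ x^{nᵢ+1} + Σ_{k=p+1}^N α_k x^{k+1}`,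
`ẏ = z g(x) − ε((p+1)/2)x^p y − Σᵢ ((nᵢ+1)/2)μᵢ x^{nᵢ} y − Σ_k ((k+1)/2)α_k x^k y`,
`ż = −y g(x) − ε((p+1)/2)x^p z − Σᵢ ((nᵢ+1)/2)μᵢ x^{nᵢ} z − Σ_k ((k+1)/2)α_k x^k z`
admits the first integral
`f = (y²+z²)((1/2)(y²+z²) + ε x^{p+1} + Σᵢ μᵢ x^{nᵢ+1} + Σ_k α_k x^{k+1})`. -/
theorem parametric_normal_form_first_integral
    (p N : ℕ) (hp : 1 ≤ p) (ε : ℝ) (hε : ε = 1 ∨ ε = -1)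
    (r : ℕ) (nIdx : Fin r → ℤ) (hn : ∀ i, -1 ≤ nIdx i ∧ nIdx i ≤ (N : ℤ) - 1)
    (μ : Fin r → ℝ) (α : ℕ → ℝ)
    (g : PS) (hg : ∀ d : Fin 3 →₀ ℕ, (d 1 ≠ 0 ∨ d 2 ≠ 0) → MvPowerSeries.coeff (R := ℝ) d g = 0)
    (w : Fin 3 → PS)
    (hw : w =
      ![(MvPowerSeries.X 1 ^ 2 + MvPowerSeries.X 2 ^ 2) + ε • MvPowerSeries.X 0 ^ (p + 1) +
          ∑ i, μ i • MvPowerSeries.X 0 ^ (nIdx i + 1).toNat +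
          ∑ k ∈ Finset.Icc (p + 1) N, α k • MvPowerSeries.X 0 ^ (k + 1),
        MvPowerSeries.X 2 * g -
          (ε * ((p : ℝ) + 1) / 2) • (MvPowerSeries.X 0 ^ p * MvPowerSeries.X 1) -
          ∑ i, (((nIdx i : ℝ) + 1) / 2 * μ i) •
            (MvPowerSeries.X 0 ^ (nIdx i).toNat * MvPowerSeries.X 1) -
          ∑ k ∈ Finset.Icc (p + 1) N, (((k : ℝ) + 1) / 2 * α k) •
            (MvPowerSeries.X 0 ^ k * MvPowerSeries.X 1),
        -(MvPowerSeries.X 1 * g) -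
          (ε * ((p : ℝ) + 1) / 2) • (MvPowerSeries.X 0 ^ p * MvPowerSeries.X 2) -
          ∑ i, (((nIdx i : ℝ) + 1) / 2 * μ i) •
            (MvPowerSeries.X 0 ^ (nIdx i).toNat * MvPowerSeries.X 2) -
          ∑ k ∈ Finset.Icc (p + 1) N, (((k : ℝ) + 1) / 2 * α k) •
            (MvPowerSeries.X 0 ^ k * MvPowerSeries.X 2)])
    (f : PS)
    (hf : f = (MvPowerSeries.X 1 ^ 2 + MvPowerSeries.X 2 ^ 2) *
        ((1 / 2 : ℝ) • (MvPowerSeries.X 1 ^ 2 + MvPowerSeries.X 2 ^ 2) +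
          ε • MvPowerSeries.X 0 ^ (p + 1) +
          ∑ i, μ i • MvPowerSeries.X 0 ^ (nIdx i + 1).toNat +
          ∑ k ∈ Finset.Icc (p + 1) N, α k • MvPowerSeries.X 0 ^ (k + 1))) :
    psApply w f = 0 :=
  parametric_normal_form_first_integral_general p N ε r nIdx hn μ α g w hw f hf
end
end
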